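/- arXiv:2304.01698 — 3 statements merged into one kernel-verified Lean document; each statement's English description precedes it below -/
import Mathlib

section
/- Let Σ be an n×n real symmetric positive definite matrix satisfying σ_low·I ⪯ Σ ⪯ σ_high·I with 0 < σ_low ≤ σ_high. If Σ = L·Lᵀ is the Cholesky decomposition with L lower triangular with positive diagonal, then every entry of L satisfies |L_{ij}| ≤ √σ_high, and every diagonal entry satisfies |L_{ii}| ≥ σ_low^{n/2} · σ_high^{(1−n)/2}. -/
/-!
The entry bound is immediate: `L i j ^ 2 ≤ ∑ₖ L i k ^ 2 = S i i ≤ σ_high`.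
For the diagonal, `det S = ∏ⱼ L j j ^ 2`, and this determinant is at least `σ_low ^ n`
because every eigenvalue of `S` is at least `σ_low`. Bounding the `n - 1` factors with
`j ≠ i` by `σ_high` leaves `σ_low ^ n ≤ L i i ^ 2 · σ_high ^ (n - 1)`, whose square root
is the claim.
-/

open scoped Matrix

namespace Matrix

section PosSemidef

variable {ι : Type*} [DecidableEq ι] {S : Matrix ι ι ℝ} {c : ℝ}

lemma PosSemidef.diag_le_of_smul_one_sub (h : (c • (1 : Matrix ι ι ℝ) - S).PosSemidef)
    (i : ι) : S i i ≤ c := by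
  have := h.diag_nonneg (i := i)
  simp_all [sub_apply]

variable [Fintype ι]

lemma PosSemidef.le_eigenvalues_of_sub_smul_one (h : (S - c • (1 : Matrix ι ι ℝ)).PosSemidef)
    (hS : S.IsHermitian) (i : ι) : c ≤ hS.eigenvalues i := by
  set v := ⇑(hS.eigenvectorBasis i)
  have hv : star v ⬝ᵥ v = 1 := by
    rw [dotProduct_comm, ← EuclideanSpace.inner_eq_star_dotProduct, real_inner_self_eq_norm_sq,
      hS.eigenvectorBasis.orthonormal.1 i, one_pow]
  have := h.dotProduct_mulVec_nonneg v
  rw [sub_mulVec, dotProduct_sub, smul_mulVec, one_mulVec, dotProduct_smul, hv] at this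
  simpa [hS.eigenvalues_eq i] using this

lemma PosSemidef.pow_card_le_det_of_sub_smul_one (hc : 0 ≤ c)
    (h : (S - c • (1 : Matrix ι ι ℝ)).PosSemidef) : c ^ Fintype.card ι ≤ S.det := by
  have hS : S.IsHermitian := by
    simpa using h.isHermitian.add (isHermitian_one.smul (IsSelfAdjoint.all c))
  rw [hS.det_eq_prod_eigenvalues, ← Finset.card_univ, ← Finset.prod_const]
  exact_mod_cast Finset.prod_le_prod (fun _ _ => hc) fun i _ =>
    h.le_eigenvalues_of_sub_smul_one hS i

end PosSemidef

section MulTranspose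

variable {ι : Type*} [Fintype ι]

lemma mul_transpose_self_apply_self (L : Matrix ι ι ℝ) (i : ι) :
    (L * Lᵀ) i i = ∑ k, L i k ^ 2 := by
  simp [mul_apply, sq]

lemma sq_le_mul_transpose_self_apply_self (L : Matrix ι ι ℝ) (i j : ι) :
    L i j ^ 2 ≤ (L * Lᵀ) i i := by
  rw [mul_transpose_self_apply_self]
  exact Finset.single_le_sum (fun k _ => sq_nonneg (L i k)) (Finset.mem_univ j)

lemma det_mul_transpose_self_of_isLowerTriangular [DecidableEq ι] [LinearOrder ι]
    {L : Matrix ι ι ℝ} (hL : L.IsLowerTriangular) : (L * Lᵀ).det = ∏ i, L i i ^ 2 := by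
  rw [det_mul, det_transpose, det_of_isLowerTriangular L hL, ← sq, Finset.prod_pow]

end MulTranspose

end Matrix

lemma Finset.prod_mul_le_mul_pow_card {ι : Type*} [Fintype ι] [DecidableEq ι] {f : ι → ℝ}
    {b : ℝ} (hf0 : ∀ j, 0 ≤ f j) (hfb : ∀ j, f j ≤ b) (i : ι) :
    (∏ j, f j) * b ≤ f i * b ^ Fintype.card ι := by
  have hb : 0 ≤ b := (hf0 i).trans (hfb i)
  rw [← Finset.mul_prod_erase _ _ (Finset.mem_univ i), mul_assoc]
  gcongr
  · exact hf0 i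
  calc (∏ j ∈ Finset.univ.erase i, f j) * b ≤ b ^ (Finset.univ.erase i).card * b := by
        gcongr
        rw [← Finset.prod_const]
        exact Finset.prod_le_prod (fun j _ => hf0 j) fun j _ => hfb j
    _ = b ^ Fintype.card ι := by
        rw [← pow_succ, Finset.card_erase_add_one (Finset.mem_univ i), Finset.card_univ]

lemma Real.rpow_half_mul_rpow_le_abs {a b x : ℝ} {n : ℕ} (ha : 0 ≤ a) (hb : 0 < b)
    (h : a ^ n * b ≤ x ^ 2 * b ^ n) :
    a ^ ((n : ℝ) / 2) * b ^ ((1 - (n : ℝ)) / 2) ≤ |x| := by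
  have hsq : (a ^ ((n : ℝ) / 2) * b ^ ((1 - (n : ℝ)) / 2)) ^ 2 = a ^ n * b / b ^ n := by
    rw [mul_pow, ← Real.rpow_mul_natCast ha, ← Real.rpow_mul_natCast hb.le]
    push_cast
    rw [show (n : ℝ) / 2 * 2 = n by ring, show (1 - (n : ℝ)) / 2 * 2 = 1 - n by ring,
      Real.rpow_sub hb, Real.rpow_one, Real.rpow_natCast, Real.rpow_natCast, mul_div_assoc]
  refine (le_abs_self _).trans (sq_le_sq.mp ?_)
  rw [hsq, div_le_iff₀ (pow_pos hb n)]
  exact h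

theorem stmt5_general (n : ℕ) (S L : Matrix (Fin n) (Fin n) ℝ)
    (σlow σhigh : ℝ) (h0 : 0 < σlow) (h1 : σlow ≤ σhigh)
    (hlo : (S - σlow • (1 : Matrix (Fin n) (Fin n) ℝ)).PosSemidef)
    (hhi : (σhigh • (1 : Matrix (Fin n) (Fin n) ℝ) - S).PosSemidef)
    (hLtri : ∀ i j : Fin n, i < j → L i j = 0)
    (hchol : S = L * Lᵀ) :
    (∀ i j : Fin n, |L i j| ≤ Real.sqrt σhigh) ∧
    (∀ i : Fin n, σlow ^ ((n : ℝ) / 2) * σhigh ^ ((1 - (n : ℝ)) / 2) ≤ |L i i|) := by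
  subst hchol
  have hσhigh : 0 < σhigh := h0.trans_le h1
  have hsq (i j : Fin n) : L i j ^ 2 ≤ σhigh :=
    (Matrix.sq_le_mul_transpose_self_apply_self L i j).trans (hhi.diag_le_of_smul_one_sub i)
  refine ⟨fun i j => Real.abs_le_sqrt (hsq i j), fun i => ?_⟩
  apply Real.rpow_half_mul_rpow_le_abs h0.le hσhigh
  calc σlow ^ n * σhigh ≤ (L * Lᵀ).det * σhigh := by
        gcongr
        simpa using hlo.pow_card_le_det_of_sub_smul_one h0.le
    _ = (∏ j, L j j ^ 2) * σhigh := by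
        rw [Matrix.det_mul_transpose_self_of_isLowerTriangular hLtri]
    _ ≤ L i i ^ 2 * σhigh ^ n := by
        simpa using
          Finset.prod_mul_le_mul_pow_card (fun j => sq_nonneg (L j j)) (fun j => hsq j j) i

/-- Entry bounds on the Cholesky factor: if `σ_low·I ⪯ Σ ⪯ σ_high·I` with `0 < σ_low ≤ σ_high`
and `Σ = L·Lᵀ` with `L` lower triangular with positive diagonal, then every entry of `L` has
absolute value at most `√σ_high`, and every diagonal entry satisfies
`|L i i| ≥ σ_low^{n/2} σ_high^{(1−n)/2}`. -/
theorem stmt5 (n : ℕ) (S L : Matrix (Fin n) (Fin n) ℝ)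
    (σlow σhigh : ℝ) (h0 : 0 < σlow) (h1 : σlow ≤ σhigh)
    (hpd : S.PosDef)
    (hlo : (S - σlow • (1 : Matrix (Fin n) (Fin n) ℝ)).PosSemidef)
    (hhi : (σhigh • (1 : Matrix (Fin n) (Fin n) ℝ) - S).PosSemidef)
    (hLtri : ∀ i j : Fin n, i < j → L i j = 0)
    (hLdiag : ∀ i : Fin n, 0 < L i i)
    (hchol : S = L * Lᵀ) :
    (∀ i j : Fin n, |L i j| ≤ Real.sqrt σhigh) ∧
    (∀ i : Fin n, σlow ^ ((n : ℝ) / 2) * σhigh ^ ((1 - (n : ℝ)) / 2) ≤ |L i i|) :=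
  stmt5_general n S L σlow σhigh h0 h1 hlo hhi hLtri hchol
end

section
/- Consider linearized estimator dynamics x̃_{k+1|k} = U_k F̄^x_k x̃_k + U_k F̄^v_k v_{k+1} (time update) and x̃_{k+1} = (I − K̄_{k+1} U^a_{k+1} Ḡ_{k+1}) x̃_{k+1|k} − K̄_{k+1} ε_{k+1} (measurement update), with zero-mean noises v_{k+1} ~ Cov R_{k+1} and ε_{k+1} ~ Cov R̄_{k+1} independent of each other and of x̃_k. Suppose the estimator covariance recursion is Σ̄_{k+1|k} = U_k F̄^x_k Σ̄_k (F̄^x_k)ᵀ U_k + U_k F̄^v_k R_{k+1} (F̄^v_k)ᵀ U_k and Σ̄_{k+1} = (I − K̄_{k+1} U^a_{k+1} Ḡ_{k+1}) Σ̄_{k+1|k} (I − K̄_{k+1} U^a_{k+1} Ḡ_{k+1})ᵀ + K̄_{k+1} R̄_{k+1} K̄_{k+1}ᵀ. If E[x̃_k x̃_kᵀ] ⪯ Σ̄_k, then E[x̃_{k+1} x̃_{k+1}ᵀ] ⪯ Σ̄_{k+1}. -/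
/-!
The estimation error propagates through the affine map
`x̃ ↦ A x̃ + B v − K̄ ε` with `A = (I − K̄ Uᵃ Ḡ) U F̄ˣ` and `B = (I − K̄ Uᵃ Ḡ) U F̄ᵛ`.
Independence and zero mean make `x̃`, `v`, `ε` pairwise uncorrelated, so the second moments
add: `E[x̃⁺ x̃⁺ᵀ] = A E[x̃ x̃ᵀ] Aᵀ + B R Bᵀ + K̄ R̄ K̄ᵀ`. Since `U` is symmetric, the recursion
gives `Σ̄⁺ = A Σ̄ Aᵀ + B R Bᵀ + K̄ R̄ K̄ᵀ`, so `Σ̄⁺ − E[x̃⁺ x̃⁺ᵀ] = A (Σ̄ − E[x̃ x̃ᵀ]) Aᵀ ⪰ 0`.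
-/

open MeasureTheory ProbabilityTheory
open scoped Matrix

/-- The (second-moment) covariance matrix `E[x xᵀ]` of a random vector. -/
noncomputable def covMat {Ω : Type*} [MeasurableSpace Ω] (μ : Measure Ω) {n : ℕ}
    (x : Ω → Fin n → ℝ) : Matrix (Fin n) (Fin n) ℝ :=
  Matrix.of fun i j => ∫ ω, x ω i * x ω j ∂μ

section CrossCovariance

variable {Ω ι κ ι' : Type*} [MeasurableSpace Ω] {μ : Measure Ω}

noncomputable def crossCovMat (μ : Measure Ω) (f : Ω → ι → ℝ) (g : Ω → κ → ℝ) :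
    Matrix ι κ ℝ :=
  Matrix.of fun i j => ∫ ω, f ω i * g ω j ∂μ

lemma covMat_eq_crossCovMat {n : ℕ} (f : Ω → Fin n → ℝ) :
    covMat μ f = crossCovMat μ f f :=
  rfl

lemma transpose_crossCovMat (f : Ω → ι → ℝ) (g : Ω → κ → ℝ) :
    (crossCovMat μ f g)ᵀ = crossCovMat μ g f := by
  ext i j
  simp only [crossCovMat, Matrix.transpose_apply, Matrix.of_apply, mul_comm]

lemma memLp_mulVec_apply [Fintype κ] {p : ENNReal} {f : Ω → κ → ℝ}
    (hf : ∀ k, MemLp (fun ω => f ω k) p μ) (M : Matrix ι κ ℝ) (i : ι) :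
    MemLp (fun ω => (M *ᵥ f ω) i) p μ :=
  memLp_finsetSum Finset.univ fun k _ => (hf k).const_mul (M i k)

lemma memLp_add_apply {p : ENNReal} {f g : Ω → ι → ℝ} (hf : ∀ i, MemLp (fun ω => f ω i) p μ)
    (hg : ∀ i, MemLp (fun ω => g ω i) p μ) (i : ι) : MemLp (fun ω => (f ω + g ω) i) p μ :=
  (hf i).add (hg i)

lemma crossCovMat_mulVec_left [Fintype ι] {f : Ω → ι → ℝ} {g : Ω → κ → ℝ}
    (hf : ∀ i, MemLp (fun ω => f ω i) 2 μ) (hg : ∀ j, MemLp (fun ω => g ω j) 2 μ)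
    (M : Matrix ι' ι ℝ) :
    crossCovMat μ (fun ω => M *ᵥ f ω) g = M * crossCovMat μ f g := by
  ext i j
  simp only [crossCovMat, Matrix.of_apply, Matrix.mul_apply, Matrix.mulVec, dotProduct,
    Finset.sum_mul, mul_assoc]
  rw [integral_finsetSum _ fun k _ => ?_]
  · simp only [integral_const_mul]
  · exact ((hf k).integrable_mul (hg j)).const_mul (M i k)

lemma crossCovMat_mulVec_right [Fintype κ] {f : Ω → ι → ℝ} {g : Ω → κ → ℝ}
    (hf : ∀ i, MemLp (fun ω => f ω i) 2 μ) (hg : ∀ j, MemLp (fun ω => g ω j) 2 μ)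
    (N : Matrix ι' κ ℝ) :
    crossCovMat μ f (fun ω => N *ᵥ g ω) = crossCovMat μ f g * Nᵀ := by
  rw [← transpose_crossCovMat, crossCovMat_mulVec_left hg hf, Matrix.transpose_mul,
    transpose_crossCovMat]

lemma crossCovMat_mulVec_mulVec [Fintype ι] [Fintype κ] {f : Ω → ι → ℝ} {g : Ω → κ → ℝ}
    (hf : ∀ i, MemLp (fun ω => f ω i) 2 μ) (hg : ∀ j, MemLp (fun ω => g ω j) 2 μ)
    (M : Matrix ι' ι ℝ) {κ' : Type*} (N : Matrix κ' κ ℝ) :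
    crossCovMat μ (fun ω => M *ᵥ f ω) (fun ω => N *ᵥ g ω) = M * crossCovMat μ f g * Nᵀ := by
  rw [crossCovMat_mulVec_right (memLp_mulVec_apply hf M) hg, crossCovMat_mulVec_left hf hg]

lemma crossCovMat_add_left {f g : Ω → ι → ℝ} {h : Ω → κ → ℝ}
    (hf : ∀ i, MemLp (fun ω => f ω i) 2 μ) (hg : ∀ i, MemLp (fun ω => g ω i) 2 μ)
    (hh : ∀ j, MemLp (fun ω => h ω j) 2 μ) :
    crossCovMat μ (fun ω => f ω + g ω) h = crossCovMat μ f h + crossCovMat μ g h := by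
  ext i j
  simp only [crossCovMat, Matrix.of_apply, Matrix.add_apply, Pi.add_apply, add_mul]
  exact integral_add ((hf i).integrable_mul (hh j)) ((hg i).integrable_mul (hh j))

lemma crossCovMat_add_right {f : Ω → ι → ℝ} {g h : Ω → κ → ℝ}
    (hf : ∀ i, MemLp (fun ω => f ω i) 2 μ) (hg : ∀ j, MemLp (fun ω => g ω j) 2 μ)
    (hh : ∀ j, MemLp (fun ω => h ω j) 2 μ) :
    crossCovMat μ f (fun ω => g ω + h ω) = crossCovMat μ f g + crossCovMat μ f h := by
  rw [← transpose_crossCovMat, crossCovMat_add_left hg hh hf, Matrix.transpose_add,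
    transpose_crossCovMat, transpose_crossCovMat]

lemma crossCovMat_add_add_of_crossCovMat_eq_zero {f g : Ω → ι → ℝ}
    (hf : ∀ i, MemLp (fun ω => f ω i) 2 μ) (hg : ∀ i, MemLp (fun ω => g ω i) 2 μ)
    (hfg : crossCovMat μ f g = 0) :
    crossCovMat μ (fun ω => f ω + g ω) (fun ω => f ω + g ω)
      = crossCovMat μ f f + crossCovMat μ g g := by
  have hgf : crossCovMat μ g f = 0 := by rw [← transpose_crossCovMat, hfg, Matrix.transpose_zero]
  rw [crossCovMat_add_left hf hg (memLp_add_apply hf hg), crossCovMat_add_right hf hf hg,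
    crossCovMat_add_right hg hf hg, hfg, hgf, add_zero, zero_add]

lemma crossCovMat_mulVec_add_mulVec_add_mulVec [Fintype ι] [Fintype κ] {ν : Type*} [Fintype ν]
    {f : Ω → ι → ℝ} {g : Ω → κ → ℝ} {h : Ω → ν → ℝ}
    (hf : ∀ i, MemLp (fun ω => f ω i) 2 μ) (hg : ∀ j, MemLp (fun ω => g ω j) 2 μ)
    (hh : ∀ k, MemLp (fun ω => h ω k) 2 μ) (hfg : crossCovMat μ f g = 0)
    (hfh : crossCovMat μ f h = 0) (hgh : crossCovMat μ g h = 0)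
    (A : Matrix ι' ι ℝ) (B : Matrix ι' κ ℝ) (C : Matrix ι' ν ℝ) :
    crossCovMat μ (fun ω => A *ᵥ f ω + (B *ᵥ g ω + C *ᵥ h ω))
        (fun ω => A *ᵥ f ω + (B *ᵥ g ω + C *ᵥ h ω))
      = A * crossCovMat μ f f * Aᵀ
        + (B * crossCovMat μ g g * Bᵀ + C * crossCovMat μ h h * Cᵀ) := by
  have hAf := memLp_mulVec_apply hf A
  have hBg := memLp_mulVec_apply hg B
  have hCh := memLp_mulVec_apply hh C
  have hAf_BgCh : crossCovMat μ (fun ω => A *ᵥ f ω) (fun ω => B *ᵥ g ω + C *ᵥ h ω) = 0 := by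
    rw [crossCovMat_add_right hAf hBg hCh, crossCovMat_mulVec_mulVec hf hg,
      crossCovMat_mulVec_mulVec hf hh, hfg, hfh]
    simp
  have hBg_Ch : crossCovMat μ (fun ω => B *ᵥ g ω) (fun ω => C *ᵥ h ω) = 0 := by
    rw [crossCovMat_mulVec_mulVec hg hh, hgh]
    simp
  rw [crossCovMat_add_add_of_crossCovMat_eq_zero hAf (memLp_add_apply hBg hCh) hAf_BgCh,
    crossCovMat_add_add_of_crossCovMat_eq_zero hBg hCh hBg_Ch,
    crossCovMat_mulVec_mulVec hf hf, crossCovMat_mulVec_mulVec hg hg,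
    crossCovMat_mulVec_mulVec hh hh]

lemma crossCovMat_eq_zero_of_indepFun {f : Ω → ι → ℝ} {g : Ω → κ → ℝ}
    (hind : IndepFun f g μ) (hf : ∀ i, AEStronglyMeasurable (fun ω => f ω i) μ)
    (hg : ∀ j, AEStronglyMeasurable (fun ω => g ω j) μ) (hgmean : ∀ j, ∫ ω, g ω j ∂μ = 0) :
    crossCovMat μ f g = 0 := by
  ext i j
  have hij : IndepFun (fun ω => f ω i) (fun ω => g ω j) μ :=
    hind.comp (measurable_pi_apply i) (measurable_pi_apply j)
  simp [crossCovMat, hij.integral_fun_mul_eq_mul_integral (hf i) (hg j), hgmean j]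

end CrossCovariance

theorem stmt11_general {Ω : Type*} [MeasurableSpace Ω] (μ : Measure Ω)
    (n m p : ℕ)
    (U Fx : Matrix (Fin n) (Fin n) ℝ) (Fv : Matrix (Fin n) (Fin m) ℝ)
    (Kbar : Matrix (Fin n) (Fin p) ℝ) (Ua : Matrix (Fin p) (Fin p) ℝ)
    (G : Matrix (Fin p) (Fin n) ℝ)
    (hU : Uᵀ = U)
    (R : Matrix (Fin m) (Fin m) ℝ) (Rbar : Matrix (Fin p) (Fin p) ℝ)
    (x : Ω → Fin n → ℝ) (v : Ω → Fin m → ℝ) (ε : Ω → Fin p → ℝ)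
    (hx2 : ∀ i, MemLp (fun ω => x ω i) 2 μ)
    (hv2 : ∀ i, MemLp (fun ω => v ω i) 2 μ)
    (hε2 : ∀ i, MemLp (fun ω => ε ω i) 2 μ)
    (hvmean : ∀ i, ∫ ω, v ω i ∂μ = 0) (hεmean : ∀ i, ∫ ω, ε ω i ∂μ = 0)
    (hRv : covMat μ v = R) (hRε : covMat μ ε = Rbar)
    (hxv : IndepFun x v μ) (hxε : IndepFun x ε μ) (hvε : IndepFun v ε μ)
    (Sbar Sbarpred Sbarnext : Matrix (Fin n) (Fin n) ℝ)
    (hSpred : Sbarpred = U * Fx * Sbar * Fxᵀ * U + U * Fv * R * Fvᵀ * U)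
    (hSnext : Sbarnext = (1 - Kbar * Ua * G) * Sbarpred * (1 - Kbar * Ua * G)ᵀ
        + Kbar * Rbar * Kbarᵀ)
    (xnext : Ω → Fin n → ℝ)
    (hxnext : ∀ ω, xnext ω =
      (1 - Kbar * Ua * G).mulVec ((U * Fx).mulVec (x ω) + (U * Fv).mulVec (v ω))
        - Kbar.mulVec (ε ω))
    (hcons : (Sbar - covMat μ x).PosSemidef) :
    (Sbarnext - covMat μ xnext).PosSemidef := by
  set P := 1 - Kbar * Ua * G
  set A := P * (U * Fx)
  set B := P * (U * Fv)
  have hxnext_eq : xnext = fun ω => A *ᵥ x ω + (B *ᵥ v ω + (-Kbar) *ᵥ ε ω) := by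
    funext ω
    simp [hxnext, A, B, Matrix.mulVec_add, ← Matrix.mulVec_mulVec, Matrix.neg_mulVec,
      sub_eq_add_neg, add_assoc]
  have hcov : covMat μ xnext = A * covMat μ x * Aᵀ + (B * R * Bᵀ + Kbar * Rbar * Kbarᵀ) := by
    have uncorrelated {a b : ℕ} {f : Ω → Fin a → ℝ} {g : Ω → Fin b → ℝ}
        (hf : ∀ i, MemLp (fun ω => f ω i) 2 μ) (hg : ∀ i, MemLp (fun ω => g ω i) 2 μ)
        (hgmean : ∀ i, ∫ ω, g ω i ∂μ = 0) (hfg : IndepFun f g μ) : crossCovMat μ f g = 0 :=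
      crossCovMat_eq_zero_of_indepFun hfg (fun i => (hf i).1) (fun i => (hg i).1) hgmean
    rw [covMat_eq_crossCovMat, hxnext_eq, crossCovMat_mulVec_add_mulVec_add_mulVec hx2 hv2 hε2
      (uncorrelated hx2 hv2 hvmean hxv) (uncorrelated hx2 hε2 hεmean hxε)
      (uncorrelated hv2 hε2 hεmean hvε), ← hRv, ← hRε]
    simp [covMat_eq_crossCovMat]
  have hgap : Sbarnext - covMat μ xnext = A * (Sbar - covMat μ x) * Aᵀ := by
    have hAt : Aᵀ = Fxᵀ * U * Pᵀ := by simp only [A, Matrix.transpose_mul, hU, Matrix.mul_assoc]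
    have hBt : Bᵀ = Fvᵀ * U * Pᵀ := by simp only [B, Matrix.transpose_mul, hU, Matrix.mul_assoc]
    rw [hcov, hSnext, hSpred, hAt, hBt]
    simp only [A, B, Matrix.mul_add, Matrix.add_mul, Matrix.mul_sub, Matrix.sub_mul,
      Matrix.mul_assoc]
    abel
  simpa [hgap, Matrix.conjTranspose_eq_transpose_of_trivial] using
    hcons.mul_mul_conjTranspose_same A

/-- One-step conservativeness of the I-UKF under statistical linearization: with
time update `x̃⁺ₚ = U F̄ˣ x̃ + U F̄ᵛ v` and measurement update
`x̃⁺ = (I − K̄ Uᵃ Ḡ) x̃⁺ₚ − K̄ ε`, zero-mean independent noises with covariances `R, R̄`,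
and the matching covariance recursions
`Σ̄ₚ = U F̄ˣ Σ̄ (F̄ˣ)ᵀ U + U F̄ᵛ R (F̄ᵛ)ᵀ U`,
`Σ̄⁺ = (I − K̄ Uᵃ Ḡ) Σ̄ₚ (I − K̄ Uᵃ Ḡ)ᵀ + K̄ R̄ K̄ᵀ`,
if `E[x̃ x̃ᵀ] ⪯ Σ̄` then `E[x̃⁺ (x̃⁺)ᵀ] ⪯ Σ̄⁺`. -/
theorem stmt11 {Ω : Type*} [MeasurableSpace Ω] (μ : Measure Ω) [IsProbabilityMeasure μ]
    (n m p : ℕ)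
    (U Fx : Matrix (Fin n) (Fin n) ℝ) (Fv : Matrix (Fin n) (Fin m) ℝ)
    (Kbar : Matrix (Fin n) (Fin p) ℝ) (Ua : Matrix (Fin p) (Fin p) ℝ)
    (G : Matrix (Fin p) (Fin n) ℝ)
    (hU : Uᵀ = U) (hUa : Uaᵀ = Ua)
    (R : Matrix (Fin m) (Fin m) ℝ) (Rbar : Matrix (Fin p) (Fin p) ℝ)
    (x : Ω → Fin n → ℝ) (v : Ω → Fin m → ℝ) (ε : Ω → Fin p → ℝ)
    (hxm : Measurable x) (hvm : Measurable v) (hεm : Measurable ε)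
    (hx2 : ∀ i, MemLp (fun ω => x ω i) 2 μ)
    (hv2 : ∀ i, MemLp (fun ω => v ω i) 2 μ)
    (hε2 : ∀ i, MemLp (fun ω => ε ω i) 2 μ)
    (hvmean : ∀ i, ∫ ω, v ω i ∂μ = 0) (hεmean : ∀ i, ∫ ω, ε ω i ∂μ = 0)
    (hRv : covMat μ v = R) (hRε : covMat μ ε = Rbar)
    (hxv : IndepFun x v μ) (hxε : IndepFun x ε μ) (hvε : IndepFun v ε μ)
    (Sbar Sbarpred Sbarnext : Matrix (Fin n) (Fin n) ℝ)
    (hSpred : Sbarpred = U * Fx * Sbar * Fxᵀ * U + U * Fv * R * Fvᵀ * U)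
    (hSnext : Sbarnext = (1 - Kbar * Ua * G) * Sbarpred * (1 - Kbar * Ua * G)ᵀ
        + Kbar * Rbar * Kbarᵀ)
    (xnext : Ω → Fin n → ℝ)
    (hxnext : ∀ ω, xnext ω =
      (1 - Kbar * Ua * G).mulVec ((U * Fx).mulVec (x ω) + (U * Fv).mulVec (v ω))
        - Kbar.mulVec (ε ω))
    (hcons : (Sbar - covMat μ x).PosSemidef) :
    (Sbarnext - covMat μ xnext).PosSemidef :=
  stmt11_general μ n m p U Fx Fv Kbar Ua G hU R Rbar x v ε hx2 hv2 hε2 hvmean hεmean hRv hRε hxv hxε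
    hvε Sbar Sbarpred Sbarnext hSpred hSnext xnext hxnext hcons
end

section
/- By induction: if the initial estimate pair is conservative, E[x̃_0 x̃_0ᵀ] ⪯ Σ̄_0, and the error and covariance recursions of the previous statement hold for every k, then E[x̃_k x̃_kᵀ] ⪯ Σ̄_k for all k ≥ 0. -/
open MeasureTheory ProbabilityTheory
open scoped Matrix

/-! The error second moment propagates exactly like `Σ̄`. Since `x̃_k`, `v_{k+1}`, `ε_{k+1}` are
pairwise independent and the noises are centred, every cross second moment vanishes, so
`E[x̃_{k+1} x̃_{k+1}ᵀ] = A E[x̃_k x̃_kᵀ] Aᵀ + Q` with `A = (I − K̄ Uᵃ Ḡ) U F̄ˣ` and, because `Uᵀ = U`,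
the same `Q` as in the recursion for `Σ̄`. Hence `Σ̄_{k+1} − E[x̃_{k+1} x̃_{k+1}ᵀ]` is the
congruence `A (Σ̄_k − E[x̃_k x̃_kᵀ]) Aᵀ` of a positive semidefinite matrix. -/

noncomputable def crossMat {Ω : Type*} [MeasurableSpace Ω] (μ : Measure Ω) {n q : ℕ}
    (x : Ω → Fin n → ℝ) (y : Ω → Fin q → ℝ) : Matrix (Fin n) (Fin q) ℝ :=
  Matrix.of fun i j => ∫ ω, x ω i * y ω j ∂μ

section SecondMoments

variable {Ω : Type*} [MeasurableSpace Ω] {μ : Measure Ω} {n q r s : ℕ}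
  {x x' : Ω → Fin n → ℝ} {y y' : Ω → Fin q → ℝ}

lemma covMat_eq_crossMat (x : Ω → Fin n → ℝ) : covMat μ x = crossMat μ x x := rfl

lemma crossMat_transpose (x : Ω → Fin n → ℝ) (y : Ω → Fin q → ℝ) :
    (crossMat μ x y)ᵀ = crossMat μ y x := by
  ext i j
  simp only [crossMat, Matrix.transpose_apply, Matrix.of_apply, mul_comm]

lemma memLp_mulVec_apply_s12 (A : Matrix (Fin r) (Fin n) ℝ)
    (hx : ∀ i, MemLp (fun ω => x ω i) 2 μ) (i : Fin r) :
    MemLp (fun ω => (A *ᵥ x ω) i) 2 μ := by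
  simpa only [Matrix.mulVec, dotProduct] using
    memLp_finsetSum Finset.univ fun a _ => (hx a).const_mul (A i a)

lemma crossMat_mulVec_mulVec (A : Matrix (Fin r) (Fin n) ℝ) (B : Matrix (Fin s) (Fin q) ℝ)
    (hx : ∀ i, MemLp (fun ω => x ω i) 2 μ) (hy : ∀ j, MemLp (fun ω => y ω j) 2 μ) :
    crossMat μ (fun ω => A *ᵥ x ω) (fun ω => B *ᵥ y ω) = A * crossMat μ x y * Bᵀ := by
  ext i j
  have hint (a : Fin n) (b : Fin q) :
      Integrable (fun ω => A i a * B j b * (x ω a * y ω b)) μ :=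
    ((hx a).integrable_mul (hy b)).const_mul _
  have hexpand (ω : Ω) : (A *ᵥ x ω) i * (B *ᵥ y ω) j
      = ∑ a, ∑ b, A i a * B j b * (x ω a * y ω b) := by
    simp only [Matrix.mulVec, dotProduct, Finset.sum_mul_sum]
    exact Finset.sum_congr rfl fun a _ => Finset.sum_congr rfl fun b _ => by ring
  simp only [crossMat, Matrix.of_apply, hexpand, Matrix.mul_apply, Matrix.transpose_apply,
    Finset.sum_mul]
  rw [integral_finsetSum _ fun a _ => integrable_finsetSum _ fun b _ => hint a b,
    Finset.sum_comm]
  refine Finset.sum_congr rfl fun a _ => ?_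
  rw [integral_finsetSum _ fun b _ => hint a b]
  refine Finset.sum_congr rfl fun b _ => ?_
  rw [integral_const_mul]
  ring

lemma crossMat_add_left (hx : ∀ i, MemLp (fun ω => x ω i) 2 μ)
    (hx' : ∀ i, MemLp (fun ω => x' ω i) 2 μ) (hy : ∀ j, MemLp (fun ω => y ω j) 2 μ) :
    crossMat μ (x + x') y = crossMat μ x y + crossMat μ x' y := by
  ext i j
  simp only [crossMat, Matrix.of_apply, Matrix.add_apply, Pi.add_apply, add_mul]
  exact integral_add ((hx i).integrable_mul (hy j)) ((hx' i).integrable_mul (hy j))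

lemma crossMat_add_right (hx : ∀ i, MemLp (fun ω => x ω i) 2 μ)
    (hy : ∀ j, MemLp (fun ω => y ω j) 2 μ) (hy' : ∀ j, MemLp (fun ω => y' ω j) 2 μ) :
    crossMat μ x (y + y') = crossMat μ x y + crossMat μ x y' := by
  ext i j
  simp only [crossMat, Matrix.of_apply, Matrix.add_apply, Pi.add_apply, mul_add]
  exact integral_add ((hx i).integrable_mul (hy j)) ((hx i).integrable_mul (hy' j))

lemma crossMat_eq_zero_of_indepFun (h : IndepFun x y μ)
    (hx : ∀ i, AEStronglyMeasurable (fun ω => x ω i) μ)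
    (hy : ∀ j, AEStronglyMeasurable (fun ω => y ω j) μ)
    (hy0 : ∀ j, ∫ ω, y ω j ∂μ = 0) :
    crossMat μ x y = 0 := by
  ext i j
  have hij : IndepFun (fun ω => x ω i) (fun ω => y ω j) μ :=
    h.comp (measurable_pi_apply i) (measurable_pi_apply j)
  simp only [crossMat, Matrix.of_apply, Matrix.zero_apply,
    hij.integral_fun_mul_eq_mul_integral (hx i) (hy j)]
  exact mul_eq_zero_of_right _ (hy0 j)

lemma crossMat_mulVec_mulVec_eq_zero_of_indepFun (A : Matrix (Fin r) (Fin n) ℝ)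
    (B : Matrix (Fin s) (Fin q) ℝ) (h : IndepFun x y μ) (hx : ∀ i, MemLp (fun ω => x ω i) 2 μ)
    (hy : ∀ j, MemLp (fun ω => y ω j) 2 μ) (hy0 : ∀ j, ∫ ω, y ω j ∂μ = 0) :
    crossMat μ (fun ω => A *ᵥ x ω) (fun ω => B *ᵥ y ω) = 0 := by
  rw [crossMat_mulVec_mulVec A B hx hy,
    crossMat_eq_zero_of_indepFun h (fun i => (hx i).1) (fun j => (hy j).1) hy0,
    Matrix.mul_zero, Matrix.zero_mul]

/-- The two cross terms are transposes of each other, so one vanishing hypothesis suffices. -/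
lemma covMat_add_of_crossMat_eq_zero (h : crossMat μ x x' = 0)
    (hx : ∀ i, MemLp (fun ω => x ω i) 2 μ) (hx' : ∀ i, MemLp (fun ω => x' ω i) 2 μ) :
    covMat μ (x + x') = covMat μ x + covMat μ x' := by
  have hxx' : ∀ i, MemLp (fun ω => (x + x') ω i) 2 μ := fun i => (hx i).add (hx' i)
  have h' : crossMat μ x' x = 0 := by rw [← crossMat_transpose, h, Matrix.transpose_zero]
  rw [covMat_eq_crossMat, crossMat_add_left hx hx' hxx', crossMat_add_right hx hx hx',
    crossMat_add_right hx' hx hx', h, h', add_zero, zero_add]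
  rfl

lemma covMat_mulVec (A : Matrix (Fin r) (Fin n) ℝ) (hx : ∀ i, MemLp (fun ω => x ω i) 2 μ) :
    covMat μ (fun ω => A *ᵥ x ω) = A * covMat μ x * Aᵀ :=
  crossMat_mulVec_mulVec A A hx hx

lemma covMat_mulVec_add_mulVec_sub_mulVec {a : Ω → Fin n → ℝ} {b : Ω → Fin q → ℝ}
    {c : Ω → Fin s → ℝ} (A : Matrix (Fin r) (Fin n) ℝ) (B : Matrix (Fin r) (Fin q) ℝ)
    (C : Matrix (Fin r) (Fin s) ℝ) (ha : ∀ i, MemLp (fun ω => a ω i) 2 μ)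
    (hb : ∀ i, MemLp (fun ω => b ω i) 2 μ) (hc : ∀ i, MemLp (fun ω => c ω i) 2 μ)
    (hb0 : ∀ i, ∫ ω, b ω i ∂μ = 0) (hc0 : ∀ i, ∫ ω, c ω i ∂μ = 0)
    (hab : IndepFun a b μ) (hac : IndepFun a c μ) (hbc : IndepFun b c μ) :
    covMat μ (fun ω => A *ᵥ a ω + B *ᵥ b ω - C *ᵥ c ω)
      = A * covMat μ a * Aᵀ + (B * covMat μ b * Bᵀ + C * covMat μ c * Cᵀ) := by
  have hA := memLp_mulVec_apply_s12 A ha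
  have hB := memLp_mulVec_apply_s12 B hb
  have hC := memLp_mulVec_apply_s12 (-C) hc
  have hAB := crossMat_mulVec_mulVec_eq_zero_of_indepFun A B hab ha hb hb0
  have hAC := crossMat_mulVec_mulVec_eq_zero_of_indepFun A (-C) hac ha hc hc0
  have hBC := crossMat_mulVec_mulVec_eq_zero_of_indepFun B (-C) hbc hb hc hc0
  have hsplit : (fun ω => A *ᵥ a ω + B *ᵥ b ω - C *ᵥ c ω)
      = (fun ω => A *ᵥ a ω) + (fun ω => B *ᵥ b ω) + fun ω => (-C) *ᵥ c ω := by
    funext ω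
    simp only [Pi.add_apply, Matrix.neg_mulVec, sub_eq_add_neg]
  have hABC : crossMat μ ((fun ω => A *ᵥ a ω) + fun ω => B *ᵥ b ω) (fun ω => (-C) *ᵥ c ω)
      = 0 := by
    rw [crossMat_add_left hA hB hC, hAC, hBC, add_zero]
  rw [hsplit, covMat_add_of_crossMat_eq_zero hABC (fun i => (hA i).add (hB i)) hC,
    covMat_add_of_crossMat_eq_zero hAB hA hB, covMat_mulVec A ha, covMat_mulVec B hb,
    covMat_mulVec (-C) hc]
  simp only [Matrix.transpose_neg, Matrix.neg_mul, Matrix.mul_neg, neg_neg, add_assoc]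

end SecondMoments

lemma Matrix.PosSemidef.conj_add_sub_conj_add {m n : Type*} [Fintype m] [Fintype n]
    {S P : Matrix n n ℝ} (h : (S - P).PosSemidef) (A : Matrix m n ℝ) (Q : Matrix m m ℝ) :
    (A * S * Aᵀ + Q - (A * P * Aᵀ + Q)).PosSemidef := by
  rw [add_sub_add_right_eq_sub, ← Matrix.sub_mul, ← Matrix.mul_sub]
  simpa only [Matrix.conjTranspose_eq_transpose_of_trivial] using
    h.mul_mul_conjTranspose_same A

theorem stmt12_general {Ω : Type*} [MeasurableSpace Ω] (μ : Measure Ω)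
    (n m p : ℕ)
    (U Fx : ℕ → Matrix (Fin n) (Fin n) ℝ) (Fv : ℕ → Matrix (Fin n) (Fin m) ℝ)
    (Kbar : ℕ → Matrix (Fin n) (Fin p) ℝ) (Ua : ℕ → Matrix (Fin p) (Fin p) ℝ)
    (G : ℕ → Matrix (Fin p) (Fin n) ℝ)
    (hU : ∀ k, (U k)ᵀ = U k)
    (R : ℕ → Matrix (Fin m) (Fin m) ℝ) (Rbar : ℕ → Matrix (Fin p) (Fin p) ℝ)
    (x : ℕ → Ω → Fin n → ℝ) (v : ℕ → Ω → Fin m → ℝ) (ε : ℕ → Ω → Fin p → ℝ)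
    (hx2 : ∀ k i, MemLp (fun ω => x k ω i) 2 μ)
    (hv2 : ∀ k i, MemLp (fun ω => v k ω i) 2 μ)
    (hε2 : ∀ k i, MemLp (fun ω => ε k ω i) 2 μ)
    (hvmean : ∀ k i, ∫ ω, v k ω i ∂μ = 0) (hεmean : ∀ k i, ∫ ω, ε k ω i ∂μ = 0)
    (hRv : ∀ k, covMat μ (v k) = R k) (hRε : ∀ k, covMat μ (ε k) = Rbar k)
    (hxv : ∀ k, IndepFun (x k) (v (k + 1)) μ)
    (hxε : ∀ k, IndepFun (x k) (ε (k + 1)) μ)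
    (hvε : ∀ k, IndepFun (v (k + 1)) (ε (k + 1)) μ)
    (Sbar : ℕ → Matrix (Fin n) (Fin n) ℝ)
    (hSrec : ∀ k, Sbar (k + 1) =
      (1 - Kbar (k + 1) * Ua (k + 1) * G (k + 1))
          * (U k * Fx k * Sbar k * (Fx k)ᵀ * U k + U k * Fv k * R (k + 1) * (Fv k)ᵀ * U k)
          * (1 - Kbar (k + 1) * Ua (k + 1) * G (k + 1))ᵀ
        + Kbar (k + 1) * Rbar (k + 1) * (Kbar (k + 1))ᵀ)
    (hxrec : ∀ k ω, x (k + 1) ω =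
      (1 - Kbar (k + 1) * Ua (k + 1) * G (k + 1)).mulVec
          ((U k * Fx k).mulVec (x k ω) + (U k * Fv k).mulVec (v (k + 1) ω))
        - (Kbar (k + 1)).mulVec (ε (k + 1) ω))
    (hinit : (Sbar 0 - covMat μ (x 0)).PosSemidef) :
    ∀ k, (Sbar k - covMat μ (x k)).PosSemidef := by
  intro k
  induction k with
  | zero => exact hinit
  | succ k ih =>
    have hSk := hSrec k
    have hxk := hxrec k
    generalize 1 - Kbar (k + 1) * Ua (k + 1) * G (k + 1) = M at hSk hxk
    have hx : x (k + 1) = fun ω => (M * (U k * Fx k)) *ᵥ x k ω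
        + (M * (U k * Fv k)) *ᵥ v (k + 1) ω - Kbar (k + 1) *ᵥ ε (k + 1) ω := by
      funext ω
      rw [hxk, Matrix.mulVec_add, Matrix.mulVec_mulVec, Matrix.mulVec_mulVec]
    have hcov : covMat μ (x (k + 1)) = M * (U k * Fx k) * covMat μ (x k) * (M * (U k * Fx k))ᵀ
        + (M * (U k * Fv k) * R (k + 1) * (M * (U k * Fv k))ᵀ
          + Kbar (k + 1) * Rbar (k + 1) * (Kbar (k + 1))ᵀ) := by
      rw [hx, covMat_mulVec_add_mulVec_sub_mulVec _ _ _ (hx2 k) (hv2 (k + 1)) (hε2 (k + 1))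
        (hvmean (k + 1)) (hεmean (k + 1)) (hxv k) (hxε k) (hvε k), hRv, hRε]
    have hS : Sbar (k + 1) = M * (U k * Fx k) * Sbar k * (M * (U k * Fx k))ᵀ
        + (M * (U k * Fv k) * R (k + 1) * (M * (U k * Fv k))ᵀ
          + Kbar (k + 1) * Rbar (k + 1) * (Kbar (k + 1))ᵀ) := by
      simp only [hSk, Matrix.transpose_mul, hU, Matrix.mul_add, Matrix.add_mul,
        Matrix.mul_assoc, add_assoc]
    rw [hS, hcov]
    exact ih.conj_add_sub_conj_add _ _

/-- Conservativeness of the I-UKF by induction: if the initial estimate pair is conservative,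
`E[x̃_0 x̃_0ᵀ] ⪯ Σ̄_0`, and for every `k` the linearized error dynamics
`x̃_{k+1} = (I − K̄_{k+1} Uᵃ_{k+1} Ḡ_{k+1})(U_k F̄ˣ_k x̃_k + U_k F̄ᵛ_k v_{k+1}) − K̄_{k+1} ε_{k+1}`
hold with mutually independent zero-mean noises of covariances `R_{k+1}, R̄_{k+1}` and the
matching Riccati-type covariance recursion for `Σ̄_k`, then `E[x̃_k x̃_kᵀ] ⪯ Σ̄_k` for all `k`. -/
theorem stmt12 {Ω : Type*} [MeasurableSpace Ω] (μ : Measure Ω) [IsProbabilityMeasure μ]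
    (n m p : ℕ)
    (U Fx : ℕ → Matrix (Fin n) (Fin n) ℝ) (Fv : ℕ → Matrix (Fin n) (Fin m) ℝ)
    (Kbar : ℕ → Matrix (Fin n) (Fin p) ℝ) (Ua : ℕ → Matrix (Fin p) (Fin p) ℝ)
    (G : ℕ → Matrix (Fin p) (Fin n) ℝ)
    (hU : ∀ k, (U k)ᵀ = U k) (hUa : ∀ k, (Ua k)ᵀ = Ua k)
    (R : ℕ → Matrix (Fin m) (Fin m) ℝ) (Rbar : ℕ → Matrix (Fin p) (Fin p) ℝ)
    (x : ℕ → Ω → Fin n → ℝ) (v : ℕ → Ω → Fin m → ℝ) (ε : ℕ → Ω → Fin p → ℝ)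
    (hxm : ∀ k, Measurable (x k)) (hvm : ∀ k, Measurable (v k)) (hεm : ∀ k, Measurable (ε k))
    (hx2 : ∀ k i, MemLp (fun ω => x k ω i) 2 μ)
    (hv2 : ∀ k i, MemLp (fun ω => v k ω i) 2 μ)
    (hε2 : ∀ k i, MemLp (fun ω => ε k ω i) 2 μ)
    (hvmean : ∀ k i, ∫ ω, v k ω i ∂μ = 0) (hεmean : ∀ k i, ∫ ω, ε k ω i ∂μ = 0)
    (hRv : ∀ k, covMat μ (v k) = R k) (hRε : ∀ k, covMat μ (ε k) = Rbar k)
    (hxv : ∀ k, IndepFun (x k) (v (k + 1)) μ)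
    (hxε : ∀ k, IndepFun (x k) (ε (k + 1)) μ)
    (hvε : ∀ k, IndepFun (v (k + 1)) (ε (k + 1)) μ)
    (Sbar : ℕ → Matrix (Fin n) (Fin n) ℝ)
    (hSrec : ∀ k, Sbar (k + 1) =
      (1 - Kbar (k + 1) * Ua (k + 1) * G (k + 1))
          * (U k * Fx k * Sbar k * (Fx k)ᵀ * U k + U k * Fv k * R (k + 1) * (Fv k)ᵀ * U k)
          * (1 - Kbar (k + 1) * Ua (k + 1) * G (k + 1))ᵀ
        + Kbar (k + 1) * Rbar (k + 1) * (Kbar (k + 1))ᵀ)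
    (hxrec : ∀ k ω, x (k + 1) ω =
      (1 - Kbar (k + 1) * Ua (k + 1) * G (k + 1)).mulVec
          ((U k * Fx k).mulVec (x k ω) + (U k * Fv k).mulVec (v (k + 1) ω))
        - (Kbar (k + 1)).mulVec (ε (k + 1) ω))
    (hinit : (Sbar 0 - covMat μ (x 0)).PosSemidef) :
    ∀ k, (Sbar k - covMat μ (x k)).PosSemidef :=
  stmt12_general μ n m p U Fx Fv Kbar Ua G hU R Rbar x v ε hx2 hv2 hε2 hvmean hεmean hRv hRε hxv hxε
    hvε Sbar hSrec hxrec hinit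
end
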